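/- Characterisation of quaternionic tight frames whose complexification is tight: let V = [v_1,…,v_n] = V₁ + V₂·j ∈ ℍ^{d×n} satisfy V·Vᴴ = A·I_d for a real A > 0, and let V_ℂ ∈ ℂ^{2d×n} stack V₁ on top of conj(V₂). Then V_ℂ·V_ℂᴴ = (A/2)·I_{2d} if and only if ∑_j ∑_k |Co₁(⟨v_j, v_k⟩)|² = ∑_j ∑_k |Co₂(⟨v_j, v_k⟩)|², where for a quaternion q = z + w·j (z, w ∈ ℂ) one sets Co₁(q) := z and Co₂(q) := conj(w). -/
import Mathlib


open Quaternion Matrix BigOperators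

/-- Euclidean inner product on `ℍ^d`: `⟨v,w⟩ = ∑ i, conj (w i) * v i`
(linear in the first variable). -/
noncomputable def qip {d : ℕ} (v w : Fin d → ℍ[ℝ]) : ℍ[ℝ] :=
  ∑ i, star (w i) * v i

/-- First complex coordinate of the Cayley–Dickson decomposition `q = z + w·j`:
`Co₁(q) = z`. -/
noncomputable def Co₁ (q : ℍ[ℝ]) : ℂ := ⟨q.re, q.imI⟩

/-- Second complex coordinate of the Cayley–Dickson decomposition `q = z + w·j`:
`Co₂(q) = conj w`. -/
noncomputable def Co₂ (q : ℍ[ℝ]) : ℂ := ⟨q.imJ, -q.imK⟩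


noncomputable def Co1Hom : ℍ[ℝ] →+ ℂ where
  toFun := Co₁
  map_zero' := by simp [Co₁, Complex.ext_iff]
  map_add' p q := by simp [Co₁, Complex.ext_iff]

lemma Co1_sum {ι : Type*} (s : Finset ι) (f : ι → ℍ[ℝ]) :
    Co₁ (∑ i ∈ s, f i) = ∑ i ∈ s, Co₁ (f i) := map_sum Co1Hom f s

lemma Co1_star_mul (q p : ℍ[ℝ]) :
    Co₁ (star q * p) = (starRingEnd ℂ) (Co₁ q) * Co₁ p + (starRingEnd ℂ) (Co₂ q) * Co₂ p := by
  simp [Co₁, Co₂, Complex.ext_iff, Complex.mul_re, Complex.mul_im]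
  constructor <;> ring

lemma normSq_co (q : ℍ[ℝ]) :
    Complex.normSq (Co₁ q) + Complex.normSq (Co₂ q) = Quaternion.normSq q := by
  simp [Co₁, Co₂, Complex.normSq_apply, Quaternion.normSq_def']; ring

noncomputable def ReHom : ℍ[ℝ] →+ ℝ where
  toFun := QuaternionAlgebra.re
  map_zero' := rfl
  map_add' _ _ := rfl

lemma qre_sum {ι : Type*} (s : Finset ι) (f : ι → ℍ[ℝ]) :
    (∑ i ∈ s, f i).re = ∑ i ∈ s, (f i).re := map_sum ReHom f s

lemma quat_re_mul_comm (p q : ℍ[ℝ]) : (p * q).re = (q * p).re := by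
  simp [Quaternion.re_mul]; ring

lemma re_trace_mul_comm {m n : Type*} [Fintype m] [Fintype n]
    (A : Matrix m n ℍ[ℝ]) (B : Matrix n m ℍ[ℝ]) :
    (Matrix.trace (A * B)).re = (Matrix.trace (B * A)).re := by
  simp only [Matrix.trace, Matrix.diag, Matrix.mul_apply, qre_sum]
  rw [Finset.sum_comm]
  exact Finset.sum_congr rfl fun i _ => Finset.sum_congr rfl fun j _ => quat_re_mul_comm _ _

lemma trace_sq_eq {m : Type*} [Fintype m] (H : Matrix m m ℂ) (hH : H.IsHermitian) :
    Matrix.trace (H * H) = ((∑ p, ∑ q, Complex.normSq (H p q) : ℝ) : ℂ) := by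
  simp only [Matrix.trace, Matrix.diag, Matrix.mul_apply]
  push_cast
  refine Finset.sum_congr rfl fun p _ => Finset.sum_congr rfl fun q _ => ?_
  have h2 : H q p = (starRingEnd ℂ) (H p q) := by
    conv_lhs => rw [← hH.eq]
    rfl
  rw [h2, Complex.mul_conj]

lemma qsum_normSq_eq_retrace {m n : Type*} [Fintype m] [Fintype n] (X : Matrix m n ℍ[ℝ]) :
    ∑ p, ∑ q, Quaternion.normSq (X p q) = (Matrix.trace (X * Xᴴ)).re := by
  simp only [Matrix.trace, Matrix.diag, Matrix.mul_apply, qre_sum, Matrix.conjTranspose_apply,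
    Quaternion.normSq_def]

/-- Characterisation of quaternionic tight frames whose complexification is tight:
if `V = V₁ + V₂·j ∈ ℍ^{d×n}` is a tight frame (`V Vᴴ = A I_d`, `A > 0`), and
`V_ℂ ∈ ℂ^{2d×n}` stacks `V₁` on top of `conj(V₂)` (whose entries are, columnwise,
`Co₁` and `Co₂` of the entries of `V`), then `V_ℂ V_ℂᴴ = (A/2) I_{2d}` iff
`∑_j ∑_k |Co₁⟨v_j,v_k⟩|² = ∑_j ∑_k |Co₂⟨v_j,v_k⟩|²`. -/
theorem quaternionic_tight_frame_complexification_tight_iff (d n : ℕ)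
    (V : Matrix (Fin d) (Fin n) ℍ[ℝ]) (A : ℝ) (hA : 0 < A)
    (htight : V * Vᴴ = A • (1 : Matrix (Fin d) (Fin d) ℍ[ℝ])) :
    (Matrix.fromRows (V.map Co₁) (V.map Co₂) *
        (Matrix.fromRows (V.map Co₁) (V.map Co₂))ᴴ =
        (A / 2) • (1 : Matrix (Fin d ⊕ Fin d) (Fin d ⊕ Fin d) ℂ)) ↔
      ∑ j, ∑ k, Complex.normSq (Co₁ (qip (fun i => V i j) (fun i => V i k))) =
        ∑ j, ∑ k, Complex.normSq (Co₂ (qip (fun i => V i j) (fun i => V i k))) := by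
  set M : Matrix (Fin d ⊕ Fin d) (Fin n) ℂ := Matrix.fromRows (V.map Co₁) (V.map Co₂) with hM
  set P : Matrix (Fin d ⊕ Fin d) (Fin d ⊕ Fin d) ℂ := M * Mᴴ with hP
  set G : Matrix (Fin n) (Fin n) ℂ := Mᴴ * M with hGdef
  -- Key1
  have hG : ∀ j k : Fin n, Co₁ (qip (fun i => V i j) (fun i => V i k)) = G k j := by
    intro j k
    simp [qip, Co1_sum, hGdef, hM, Matrix.mul_apply, Fintype.sum_sum_type, Co1_star_mul,
      Finset.sum_add_distrib]
  -- t1 = S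
  have hS : (∑ j, ∑ k, Complex.normSq (Co₁ (qip (fun i => V i j) (fun i => V i k))))
      = ∑ p, ∑ q, Complex.normSq (P p q) := by
    have h1 : ∀ j k : Fin n, Complex.normSq (Co₁ (qip (fun i => V i j) (fun i => V i k)))
        = Complex.normSq (G k j) := fun j k => by rw [hG]
    simp_rw [h1]
    rw [Finset.sum_comm]
    have hGh : G.IsHermitian := Matrix.isHermitian_conjTranspose_mul_self M
    have hPh : P.IsHermitian := Matrix.isHermitian_mul_conjTranspose_self M
    have ht : Matrix.trace (G * G) = Matrix.trace (P * P) := by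
      rw [hGdef, hP, show Mᴴ * M * (Mᴴ * M) = Mᴴ * (M * Mᴴ * M) by
          simp only [Matrix.mul_assoc], Matrix.trace_mul_comm]
      simp only [Matrix.mul_assoc]
    have := (trace_sq_eq G hGh).symm.trans (ht.trans (trace_sq_eq P hPh))
    exact_mod_cast this
  -- quaternionic gram
  have hq : ∀ j k : Fin n, qip (fun i => V i j) (fun i => V i k) = (Vᴴ * V) k j := by
    intro j k; simp [qip, Matrix.mul_apply, Matrix.conjTranspose_apply]
  -- t1 + t2 = A^2 d
  have hsum : (∑ j, ∑ k, Complex.normSq (Co₁ (qip (fun i => V i j) (fun i => V i k))))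
      + (∑ j, ∑ k, Complex.normSq (Co₂ (qip (fun i => V i j) (fun i => V i k))))
      = A^2 * d := by
    have : (∑ j, ∑ k, (Complex.normSq (Co₁ (qip (fun i => V i j) (fun i => V i k)))
        + Complex.normSq (Co₂ (qip (fun i => V i j) (fun i => V i k)))))
        = A^2 * d := by
      simp_rw [normSq_co, hq]
      rw [Finset.sum_comm]
      have := qsum_normSq_eq_retrace (Vᴴ * V)
      rw [this]
      have hherm : (Vᴴ * V)ᴴ = Vᴴ * V := by
        simp [Matrix.conjTranspose_mul]
      rw [hherm, show Vᴴ * V * (Vᴴ * V) = Vᴴ * (V * Vᴴ * V) by simp only [Matrix.mul_assoc],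
        re_trace_mul_comm, show V * Vᴴ * V * Vᴴ = (V * Vᴴ) * (V * Vᴴ) by
          simp only [Matrix.mul_assoc], htight]
      simp [Matrix.smul_mul, Matrix.mul_smul, Matrix.trace_smul, Matrix.trace_one]
      ring
    rw [← this, ← Finset.sum_add_distrib]
    exact Finset.sum_congr rfl fun j _ => (Finset.sum_add_distrib).symm
  -- trace P
  have hTr : ∑ p, (P p p).re = A * d := by
    have h1 : ∀ p, (P p p).re = ∑ k, Complex.normSq (M p k) := by
      intro p
      simp only [hP, Matrix.mul_apply, Matrix.conjTranspose_apply, Complex.re_sum]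
      exact Finset.sum_congr rfl fun k _ => by
        rw [show star (M p k) = (starRingEnd ℂ) (M p k) from rfl, Complex.mul_conj]; simp
    simp_rw [h1]
    have h2 : ∑ p : Fin d ⊕ Fin d, ∑ k, Complex.normSq (M p k)
        = ∑ i, ∑ k, Quaternion.normSq (V i k) := by
      rw [Fintype.sum_sum_type]
      simp only [hM, Matrix.fromRows_apply_inl, Matrix.fromRows_apply_inr, Matrix.map_apply]
      rw [← Finset.sum_add_distrib]
      exact Finset.sum_congr rfl fun i _ => by
        rw [← Finset.sum_add_distrib]
        exact Finset.sum_congr rfl fun k _ => normSq_co _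
    rw [h2, qsum_normSq_eq_retrace V, htight]
    simp [Matrix.trace_smul, Matrix.trace_one]
  -- equality characterization
  have hcard : (Finset.univ : Finset (Fin d ⊕ Fin d)).card = 2 * d := by
    simp [Fintype.card_sum]; ring
  have key : (P = (A / 2) • 1) ↔ ∑ p, ∑ q, Complex.normSq (P p q) = A^2 * d / 2 := by
    constructor
    · intro h
      rw [h]
      simp only [Matrix.smul_apply, Matrix.one_apply, smul_ite, smul_zero,
        apply_ite Complex.normSq, Complex.normSq_zero]
      have hpt : ∀ p : Fin d ⊕ Fin d, ∑ q : Fin d ⊕ Fin d,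
          (if p = q then Complex.normSq ((A/2 : ℝ) • (1:ℂ)) else 0) = (A/2)^2 := by
        intro p
        rw [Finset.sum_ite_eq Finset.univ p fun _ => Complex.normSq ((A/2 : ℝ) • (1:ℂ))]
        simp [Complex.normSq_apply]
        ring
      simp_rw [hpt]
      rw [Finset.sum_const, hcard]
      push_cast
      ring
    · intro hSval
      have hzero : ∑ p, ∑ q, Complex.normSq ((P - (A/2) • 1) p q) = 0 := by
        have expand : ∀ p q : Fin d ⊕ Fin d,
            Complex.normSq ((P - (A/2) • 1) p q)
            = Complex.normSq (P p q) - (if p = q then A * (P p p).re else 0)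
              + (if p = q then (A/2)^2 else 0) := by
          intro p q
          by_cases hpq : p = q
          · subst hpq
            simp only [Matrix.sub_apply, Matrix.smul_apply, Matrix.one_apply_eq, if_pos rfl]
            simp [Complex.normSq_apply, Complex.sub_re, Complex.sub_im]
            ring
          · simp [Matrix.sub_apply, Matrix.smul_apply, Matrix.one_apply_ne hpq, hpq]
        simp_rw [expand]
        simp only [Finset.sum_add_distrib, Finset.sum_sub_distrib, Finset.sum_ite_eq,
          Finset.mem_univ, if_true]
        rw [hSval, ← Finset.mul_sum, hTr, Finset.sum_const, hcard]
        push_cast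
        ring
      have hentry : ∀ p q, (P - (A/2) • 1) p q = 0 := by
        intro p q
        have h1 : ∀ p ∈ (Finset.univ : Finset (Fin d ⊕ Fin d)),
            0 ≤ ∑ q, Complex.normSq ((P - (A/2) • 1) p q) :=
          fun p _ => Finset.sum_nonneg fun q _ => Complex.normSq_nonneg _
        have h2 := (Finset.sum_eq_zero_iff_of_nonneg h1).mp hzero p (Finset.mem_univ p)
        have h3 := (Finset.sum_eq_zero_iff_of_nonneg
          (fun q _ => Complex.normSq_nonneg ((P - (A/2) • 1) p q))).mp h2 q (Finset.mem_univ q)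
        exact Complex.normSq_eq_zero.mp h3
      have : P - (A/2) • 1 = 0 := by
        ext p q; exact hentry p q
      have := sub_eq_zero.mp this
      exact this
  rw [key, hS]
  have hd := hsum
  constructor
  · intro h; linarith [hS, hsum]
  · intro h; linarith [hS, hsum]
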